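/- arXiv:2304.00937 — 4 statements merged into one kernel-verified Lean document; each statement's English description precedes it below -/
import Mathlib

section
/- A graph G has a P_{≥2}-factor (a spanning subgraph each of whose components is a path with at least 2 vertices) if and only if for every vertex subset X of G, the number of isolated vertices of G−X is at most 2|X|. -/
open SimpleGraph

/-- Number of isolated vertices of a graph. -/
noncomputable def isolCount {V : Type*} (G : SimpleGraph V) : ℕ :=
  Nat.card {v : V // ∀ w, ¬ G.Adj v w}

/-- Number of connected components of a graph. -/
noncomputable def compCount {V : Type*} (G : SimpleGraph V) : ℕ :=
  Nat.card G.ConnectedComponent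

/-- Number of vertices of degree exactly one. -/
noncomputable def deg1Count {V : Type*} (G : SimpleGraph V) : ℕ :=
  Nat.card {v : V // Nat.card {w : V // G.Adj v w} = 1}

/-- A graph is factor-critical if deleting any vertex leaves a graph with a perfect matching. -/
def IsFactorCritical {V : Type*} (G : SimpleGraph V) : Prop :=
  ∀ v : V, ∃ M : (G.induce ({v}ᶜ : Set V)).Subgraph, M.IsPerfectMatching

/-- `G` is the corona of the factor-critical graph induced on `S` (with `3 ≤ |S|`):
every vertex outside `S` is a pendant vertex attached to its own vertex of `S`. -/
def IsCoronaOfFactorCritical {V : Type*} (G : SimpleGraph V) (S : Set V) : Prop :=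
  3 ≤ Nat.card S ∧ IsFactorCritical (G.induce S) ∧
  ∃ z : S ≃ ↥(Sᶜ), ∀ (y : S) (w : V), G.Adj ((z y : ↥(Sᶜ)) : V) w ↔ w = (y : V)

/-- A sun is `K₁`, `K₂`, or the corona of a factor-critical graph with at least 3 vertices. -/
def IsSunGraph {V : Type*} (G : SimpleGraph V) : Prop :=
  Nat.card V = 1 ∨ (Nat.card V = 2 ∧ G.Connected) ∨ ∃ S : Set V, IsCoronaOfFactorCritical G S

/-- The number of sun components of a graph. -/
noncomputable def sunCount {V : Type*} (G : SimpleGraph V) : ℕ :=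
  Nat.card {C : G.ConnectedComponent // IsSunGraph (G.induce C.supp)}

/-- `G` has a `P_{≥k}`-factor: a spanning subgraph all of whose components are paths
of order at least `k`. -/
def HasPathFactor {V : Type*} (G : SimpleGraph V) (k : ℕ) : Prop :=
  ∃ F : SimpleGraph V, F ≤ G ∧ ∀ C : F.ConnectedComponent,
    ∃ m : ℕ, k ≤ m ∧ Nonempty ((F.induce C.supp) ≃g pathGraph m)

/-- Vertex `k`-connectivity: more than `k` vertices, and removing fewer than `k`
vertices leaves a connected graph. -/
def IsKConnected {V : Type*} (G : SimpleGraph V) (k : ℕ) : Prop :=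
  k < Nat.card V ∧ ∀ S : Set V, Nat.card S < k → (G.induce (Sᶜ : Set V)).Connected

/-- The toughness of a graph, valued in `ℝ≥0∞` (infimum over the empty set is `∞`,
which covers complete graphs). -/
noncomputable def toughness {V : Type*} (G : SimpleGraph V) : ENNReal :=
  ⨅ X : {X : Set V // 2 ≤ compCount (G.induce (Xᶜ : Set V))},
    (Nat.card X.1 : ENNReal) / (compCount (G.induce ((X.1)ᶜ : Set V)) : ENNReal)

/-- The isolated toughness of a graph, valued in `ℝ≥0∞`. -/
noncomputable def isolatedToughness {V : Type*} (G : SimpleGraph V) : ENNReal :=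
  ⨅ X : {X : Set V // 2 ≤ isolCount (G.induce (Xᶜ : Set V))},
    (Nat.card X.1 : ENNReal) / (isolCount (G.induce ((X.1)ᶜ : Set V)) : ENNReal)

/-- `G` is `(P_{≥k}, n)`-factor critical avoidable: for every vertex set `W` of size `n`
and every edge `e` of `G − W`, the graph `G − W − e` has a `P_{≥k}`-factor. -/
def PathFactorCriticalAvoidable {V : Type*} (G : SimpleGraph V) (k n : ℕ) : Prop :=
  ∀ W : Set V, Nat.card W = n → ∀ e ∈ (G.induce (Wᶜ : Set V)).edgeSet,
    HasPathFactor ((G.induce (Wᶜ : Set V)).deleteEdges {e}) k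

/-- The join of two graphs: all edges between the two sides. -/
def graphJoin {α β : Type*} (G : SimpleGraph α) (H : SimpleGraph β) :
    SimpleGraph (α ⊕ β) where
  Adj x y :=
    match x, y with
    | Sum.inl a, Sum.inl b => G.Adj a b
    | Sum.inr a, Sum.inr b => H.Adj a b
    | _, _ => True
  symm := ⟨by rintro (a|a) (b|b) h <;> simp_all <;> exact h.symm⟩
  loopless := ⟨by rintro (a|a) h <;> simp_all⟩

/-- The disjoint union of two graphs. -/
def disjUnion {α β : Type*} (G : SimpleGraph α) (H : SimpleGraph β) :
    SimpleGraph (α ⊕ β) where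
  Adj x y :=
    match x, y with
    | Sum.inl a, Sum.inl b => G.Adj a b
    | Sum.inr a, Sum.inr b => H.Adj a b
    | _, _ => False
  symm := ⟨by rintro (a|a) (b|b) h <;> simp_all <;> exact h.symm⟩
  loopless := ⟨by rintro (a|a) h <;> simp_all⟩

/-- `b` disjoint copies of `K₂`. -/
def copiesK2 (b : ℕ) : SimpleGraph (Fin b × Fin 2) where
  Adj x y := x.1 = y.1 ∧ x.2 ≠ y.2
  symm := ⟨by rintro x y ⟨h1, h2⟩; exact ⟨h1.symm, h2.symm⟩⟩
  loopless := ⟨by rintro x ⟨h1, h2⟩; exact h2 rfl⟩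

/-!
Sufficiency. Let `X₀ ⊆ R` maximise the excess `i(G[R] - X) - |X|` and let `I` be the set of
isolated vertices of `G[R] - X₀`. By Hall's theorem, the bound `i(G[R] - X) ≤ 2|X|` lets every
vertex of `I` choose a neighbour in `X₀` with no vertex chosen more than twice: this gives stars
with one or two leaves. Maximality of the excess lets `X₀` be matched into `I`, so each centre
that was never chosen can be hung as a pendant on a leaf. Maximality also gives
`i(G[R'] - X) ≤ |X|` on the rest `R' = R \ (X₀ ∪ I)`. There, by Hall's theorem, the vertices
left unmatched by a maximal matching can be matched to matched vertices and hung as pendants on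
the matching edges.

Necessity. In a path factor every vertex has one or two neighbours. So sending each isolated
vertex of `G - X` to one of its neighbours in the factor, which lies in `X`, is at most
two-to-one.
-/

open Finset

noncomputable section

open scoped Classical

namespace List

variable {α : Type*} {r : α → α → Prop} {o₁ o₂ : Option α} {l : List α}

lemma IsChain.toList_append_append (hl : l.IsChain r) (hl₀ : l ≠ [])
    (h₁ : ∀ b ∈ o₁, ∀ a ∈ l.head?, r b a) (h₂ : ∀ b ∈ o₂, ∀ a ∈ l.getLast?, r a b) :
    (o₁.toList ++ l ++ o₂.toList).IsChain r := by
  refine IsChain.append (IsChain.append ?_ hl ?_) ?_ ?_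
  · cases o₁ <;> simp
  · cases o₁ <;> simp_all
  · cases o₂ <;> simp
  · rw [getLast?_append_of_ne_nil _ hl₀]
    cases o₂ <;> simp_all

lemma Nodup.toList_append_append (hl : l.Nodup) (h₁ : ∀ b ∈ o₁, b ∉ l) (h₂ : ∀ b ∈ o₂, b ∉ l)
    (h₁₂ : ∀ b ∈ o₁, b ∉ o₂) : (o₁.toList ++ l ++ o₂.toList).Nodup := by
  cases o₁ <;> cases o₂ <;> simp_all [nodup_append] <;> aesop

lemma Nodup.head?_ne_getLast? (hl : l.Nodup) (h₂ : 2 ≤ l.length) : l.head? ≠ l.getLast? := by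
  obtain _ | ⟨a, _ | ⟨b, l⟩⟩ := l
  · simp at h₂
  · simp at h₂
  · rw [head?_cons, getLast?_cons_cons, ne_comm, Ne, getLast?_eq_some_iff]
    rintro ⟨l', hl'⟩
    exact (nodup_cons.1 hl).1 (by simp [hl'])

end List

lemma Set.InjOn.exists_partialInv {α β : Type*} {f : α → β} {s : Set α} (hf : s.InjOn f) :
    ∃ g : β → Option α, ∀ {a b}, g b = some a ↔ a ∈ s ∧ f a = b := by
  refine ⟨fun b => if h : ∃ a ∈ s, f a = b then some h.choose else none, fun {a b} => ?_⟩
  by_cases h : ∃ a ∈ s, f a = b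
  · simp only [h, dite_true, Option.some.injEq]
    refine ⟨fun ha => ha ▸ h.choose_spec, fun ha => hf h.choose_spec.1 ha.1 ?_⟩
    rw [h.choose_spec.2, ha.2]
  · simpa [h] using fun ha => h ⟨a, ha⟩

namespace Finset

/-- Hall's theorem applied to `k` copies of every element. -/
theorem exists_forall_mem_card_fiber_le {α : Type*} (I : Finset α) (t : α → Finset α) (k : ℕ)
    (h : ∀ s ⊆ I, #s ≤ k * #(s.biUnion t)) :
    ∃ f : α → α, (∀ i ∈ I, f i ∈ t i) ∧ ∀ a, #{i ∈ I | f i = a} ≤ k := by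
  obtain ⟨F, hFinj, hF⟩ := (all_card_le_biUnion_card_iff_exists_injective
      fun i : I => t i ×ˢ range k).1 fun s => by
    have hs : (s.biUnion fun i => t i ×ˢ range k) = (s.image (↑)).biUnion t ×ˢ range k := by
      ext; simp; tauto
    rw [hs, card_product, card_range, mul_comm, ← card_image_of_injective s Subtype.val_injective]
    exact h _ fun i hi => by obtain ⟨j, -, rfl⟩ := mem_image.1 hi; exact j.2
  refine ⟨fun v => if hv : v ∈ I then (F ⟨v, hv⟩).1 else v, fun i hi => ?_, fun a => ?_⟩
  · simpa [hi] using (mem_product.1 (hF ⟨i, hi⟩)).1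
  · refine (card_le_card_of_injOn (fun v => if hv : v ∈ I then (F ⟨v, hv⟩).2 else 0)
      (t := range k) (fun i hi => ?_) fun i hi j hj hij => ?_).trans (card_range k).le
    · obtain ⟨hiI, -⟩ := mem_filter.1 hi
      simpa [hiI] using (mem_product.1 (hF ⟨i, hiI⟩)).2
    · obtain ⟨hiI, hia⟩ := mem_filter.1 hi
      obtain ⟨hjI, hja⟩ := mem_filter.1 hj
      simp only [dif_pos hiI, dif_pos hjI] at hia hja hij
      exact congrArg Subtype.val (hFinj (Prod.ext (hia.trans hja.symm) hij))

theorem exists_injOn_forall_mem {α : Type*} (I : Finset α) (t : α → Finset α)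
    (h : ∀ s ⊆ I, #s ≤ #(s.biUnion t)) :
    ∃ f : α → α, Set.InjOn f I ∧ ∀ i ∈ I, f i ∈ t i := by
  obtain ⟨f, hf, hfib⟩ := exists_forall_mem_card_fiber_le I t 1 (by simpa using h)
  exact ⟨f, fun i hi j hj hij => card_le_one.1 (hfib (f j)) i (by simp_all) j (by simp_all), hf⟩

end Finset

namespace SimpleGraph

variable {V : Type*} {G : SimpleGraph V}

def isolatedIn (G : SimpleGraph V) (S : Finset V) : Finset V :=
  {v ∈ S | ∀ w ∈ S, ¬G.Adj v w}

lemma mem_isolatedIn {S : Finset V} {v : V} :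
    v ∈ isolatedIn G S ↔ v ∈ S ∧ ∀ w ∈ S, ¬G.Adj v w :=
  mem_filter

lemma isolCount_induce_eq_card_isolatedIn (S : Finset V) :
    isolCount (G.induce (S : Set V)) = #(isolatedIn G S) := by
  rw [isolCount, ← Nat.card_eq_finsetCard]
  exact Nat.card_congr
    { toFun := fun v => ⟨v.1, mem_isolatedIn.2 ⟨v.1.2, fun w hw => v.2 ⟨w, hw⟩⟩⟩
      invFun := fun v => ⟨⟨v.1, (mem_isolatedIn.1 v.2).1⟩,
        fun w => (mem_isolatedIn.1 v.2).2 w w.2⟩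
      left_inv := fun _ => rfl
      right_inv := fun _ => rfl }

lemma subset_isolatedIn_sdiff_biUnion {R s : Finset V} (hsR : s ⊆ R)
    (hs : ∀ u ∈ s, ∀ v ∈ s, ¬G.Adj u v) :
    s ⊆ isolatedIn G (R \ s.biUnion fun u => {w ∈ R | G.Adj u w}) := by
  intro u hu
  refine mem_isolatedIn.2 ⟨mem_sdiff.2 ⟨hsR hu, fun h => ?_⟩, fun w hw huw => ?_⟩
  · obtain ⟨v, hv, hvu⟩ := mem_biUnion.1 h
    exact hs v hv u hu (mem_filter.1 hvu).2
  · exact (mem_sdiff.1 hw).2 (mem_biUnion.2 ⟨u, hu, mem_filter.2 ⟨(mem_sdiff.1 hw).1, huw⟩⟩)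

lemma biUnion_neighbors_subset (R s : Finset V) :
    (s.biUnion fun u => {w ∈ R | G.Adj u w}) ⊆ R :=
  biUnion_subset.2 fun _ _ => filter_subset _ _

structure IsPathCover (G : SimpleGraph V) (R : Finset V) (L : List (List V)) : Prop where
  isChain : ∀ p ∈ L, p.IsChain G.Adj
  two_le_length : ∀ p ∈ L, 2 ≤ p.length
  nodup : L.flatten.Nodup
  mem_flatten : ∀ {v}, v ∈ L.flatten ↔ v ∈ R

def IsEndpoint (L : List (List V)) (v : V) : Prop :=
  ∃ p ∈ L, p.head? = some v ∨ p.getLast? = some v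

lemma isPathCover_nil : IsPathCover G ∅ [] := ⟨by simp, by simp, by simp, by simp⟩

lemma isPathCover_pair {a b : V} (hab : G.Adj a b) : IsPathCover G {a, b} [[a, b]] where
  isChain := by simpa using hab
  two_le_length := by simp
  nodup := by simpa using hab.ne
  mem_flatten := by simp

namespace IsPathCover

variable {R S : Finset V} {L M : List (List V)}

lemma nodup_of_mem (hL : IsPathCover G R L) {p : List V} (hp : p ∈ L) : p.Nodup :=
  (List.nodup_flatten.1 hL.nodup).1 p hp

lemma mem_of_mem (hL : IsPathCover G R L) {p : List V} (hp : p ∈ L) {v : V} (hv : v ∈ p) :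
    v ∈ R :=
  hL.mem_flatten.1 (List.mem_flatten.2 ⟨p, hp, hv⟩)

lemma eq_of_mem (hL : IsPathCover G R L) {p q : List V} (hp : p ∈ L) (hq : q ∈ L) {v : V}
    (hvp : v ∈ p) (hvq : v ∈ q) : p = q := by
  by_contra hpq
  have : Std.Symm (α := List V) List.Disjoint := ⟨fun _ _ => List.Disjoint.symm⟩
  exact (List.nodup_flatten.1 hL.nodup).2.forall hp hq hpq hvp hvq

lemma of_map {ι : Type*} (C : List ι) (P : ι → List V)
    (hchain : ∀ x ∈ C, (P x).IsChain G.Adj) (hlen : ∀ x ∈ C, 2 ≤ (P x).length)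
    (hnodup : ∀ x ∈ C, (P x).Nodup) (hdisj : C.Pairwise fun x y => (P x).Disjoint (P y))
    (hR : ∀ v, v ∈ R ↔ ∃ x ∈ C, v ∈ P x) : IsPathCover G R (C.map P) where
  isChain := by simpa using hchain
  two_le_length := by simpa using hlen
  nodup := List.nodup_flatten.2 ⟨by simpa using hnodup, List.pairwise_map.2 hdisj⟩
  mem_flatten := by simp [hR]

lemma append (hL : IsPathCover G R L) (hM : IsPathCover G S M) (hRS : Disjoint R S) :
    IsPathCover G (R ∪ S) (L ++ M) where
  isChain p hp := (List.mem_append.1 hp).elim (hL.isChain p) (hM.isChain p)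
  two_le_length p hp := (List.mem_append.1 hp).elim (hL.two_le_length p) (hM.two_le_length p)
  nodup := by
    rw [List.flatten_append, List.nodup_append]
    exact ⟨hL.nodup, hM.nodup, fun a ha b hb hab =>
      Finset.disjoint_right.1 hRS (hM.mem_flatten.1 hb) (hab ▸ hL.mem_flatten.1 ha)⟩
  mem_flatten := by simp [hL.mem_flatten, hM.mem_flatten]

lemma exists_union_of_pendants {A B : Finset V} (hL : IsPathCover G A L) (hAB : Disjoint A B)
    (g : V → V) (hg : Set.InjOn g B) (hadj : ∀ b ∈ B, G.Adj b (g b))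
    (hend : ∀ b ∈ B, IsEndpoint L (g b)) : ∃ L', IsPathCover G (A ∪ B) L' := by
  obtain ⟨pend, mem_pend⟩ := hg.exists_partialInv
  have bind_pend_eq {o : Option V} {b : V} : o.bind pend = some b ↔ b ∈ B ∧ o = some (g b) := by
    cases o with
    | none => simp
    | some a => simpa [eq_comm] using mem_pend
  let ext : List V → List V := fun p =>
    (p.head?.bind pend).toList ++ p ++ (p.getLast?.bind pend).toList
  have mem_ext {p : List V} {v : V} :
      v ∈ ext p ↔ v ∈ p ∨ v ∈ B ∧ (p.head? = some (g v) ∨ p.getLast? = some (g v)) := by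
    simp only [ext, List.mem_append, Option.mem_toList, bind_pend_eq]
    tauto
  have mem_of_mem_ext {p : List V} {v : V} (hv : v ∈ ext p) : v ∈ p ∨ v ∈ B ∧ g v ∈ p :=
    (mem_ext.1 hv).imp_right fun ⟨hvB, h⟩ =>
      ⟨hvB, h.elim List.mem_of_mem_head? List.mem_of_mem_getLast?⟩
  refine ⟨L.map ext, of_map L ext (fun p hp => ?_) (fun p hp => ?_) (fun p hp => ?_) ?_
    fun v => ?_⟩
  · have hp₀ : p ≠ [] := List.ne_nil_of_length_pos (by linarith [hL.two_le_length p hp])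
    refine (hL.isChain p hp).toList_append_append hp₀ (fun b hb a ha => ?_) fun b hb a ha => ?_
    · obtain ⟨hbB, hpb⟩ := bind_pend_eq.1 hb
      cases Option.mem_unique ha hpb
      exact hadj b hbB
    · obtain ⟨hbB, hpb⟩ := bind_pend_eq.1 hb
      cases Option.mem_unique ha hpb
      exact (hadj b hbB).symm
  · simp only [ext, List.length_append]
    linarith [hL.two_le_length p hp]
  · have notMem {o : Option V} {b : V} (hb : b ∈ o.bind pend) : b ∉ p := fun hbp =>
      Finset.disjoint_left.1 hAB (hL.mem_of_mem hp hbp) (bind_pend_eq.1 hb).1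
    refine (hL.nodup_of_mem hp).toList_append_append (fun b => notMem) (fun b => notMem)
      fun b hb₁ hb₂ => (hL.nodup_of_mem hp).head?_ne_getLast? (hL.two_le_length p hp) ?_
    rw [(bind_pend_eq.1 hb₁).2, (bind_pend_eq.1 hb₂).2]
  · refine (List.nodup_flatten.1 hL.nodup).2.imp_of_mem fun {p q} hp hq hpq v hvp hvq => ?_
    rcases mem_of_mem_ext hvp with hvp | ⟨hvB, hgp⟩ <;>
      rcases mem_of_mem_ext hvq with hvq | ⟨hvB', hgq⟩
    · exact hpq hvp hvq
    · exact Finset.disjoint_left.1 hAB (hL.mem_of_mem hp hvp) hvB'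
    · exact Finset.disjoint_left.1 hAB (hL.mem_of_mem hq hvq) hvB
    · exact hpq hgp hgq
  · constructor
    · intro hv
      rcases mem_union.1 hv with hvA | hvB
      · obtain ⟨p, hp, hvp⟩ := List.mem_flatten.1 (hL.mem_flatten.2 hvA)
        exact ⟨p, hp, mem_ext.2 (.inl hvp)⟩
      · obtain ⟨p, hp, hgp⟩ := hend v hvB
        exact ⟨p, hp, mem_ext.2 (.inr ⟨hvB, hgp⟩)⟩
    · rintro ⟨p, hp, hv⟩
      rcases mem_of_mem_ext hv with hv | ⟨hvB, -⟩
      · exact mem_union_left _ (hL.mem_of_mem hp hv)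
      · exact mem_union_right _ hvB

end IsPathCover

/-- With at most two leaves `l`, this is a path through the centre `x`. -/
def starPath (x : V) (l : List V) : List V := l.take 1 ++ x :: l.drop 1

lemma starPath_perm (x : V) (l : List V) : (starPath x l).Perm (x :: l) := by
  rw [starPath]
  exact List.perm_middle.trans (by rw [List.take_append_drop])

lemma isChain_starPath {x : V} {l : List V} (hl : l.length ≤ 2) (hadj : ∀ i ∈ l, G.Adj i x) :
    (starPath x l).IsChain G.Adj := by
  match l, hl with
  | [], _ => simp [starPath]
  | [i], _ => simpa [starPath] using hadj
  | [i, j], _ => simpa [starPath, G.adj_comm x] using hadj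

lemma starPath_head?_or_getLast? {x i : V} {l : List V} (hl : l.length ≤ 2) (hi : i ∈ l) :
    (starPath x l).head? = some i ∨ (starPath x l).getLast? = some i := by
  match l, hl with
  | [], _ => simp at hi
  | [a], _ => simp_all [starPath]
  | [a, b], _ => simp at hi; rcases hi with rfl | rfl <;> simp [starPath]

lemma exists_isPathCover_stars {I X : Finset V} (hIX : Disjoint I X) (φ : V → V)
    (hφX : ∀ i ∈ I, φ i ∈ X) (hadj : ∀ i ∈ I, G.Adj i (φ i)) (hfib : ∀ x, #{i ∈ I | φ i = x} ≤ 2) :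
    ∃ L, IsPathCover G (I ∪ I.image φ) L ∧ ∀ i ∈ I, IsEndpoint L i := by
  let fib : V → List V := fun x => {i ∈ I | φ i = x}.toList
  have mem_fib {x i : V} : i ∈ fib x ↔ i ∈ I ∧ φ i = x := by simp [fib]
  have length_fib (x : V) : (fib x).length ≤ 2 := by simpa [fib] using hfib x
  have mem_starPath {x v : V} : v ∈ starPath x (fib x) ↔ v = x ∨ v ∈ I ∧ φ v = x := by
    rw [(starPath_perm x _).mem_iff, List.mem_cons, mem_fib]
  have centre_notMem {x : V} (hx : x ∈ I.image φ) : x ∉ I := by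
    obtain ⟨i, hi, rfl⟩ := mem_image.1 hx
    exact Finset.disjoint_right.1 hIX (hφX i hi)
  refine ⟨(I.image φ).toList.map fun x => starPath x (fib x), IsPathCover.of_map _ _
    (fun x _ => ?_) (fun x hx => ?_) (fun x hx => ?_) ?_ fun v => ?_, fun i hi => ?_⟩
  · exact isChain_starPath (length_fib x) fun i hi => (mem_fib.1 hi).2 ▸ hadj i (mem_fib.1 hi).1
  · obtain ⟨i, hi, rfl⟩ := mem_image.1 (mem_toList.1 hx)
    rw [(starPath_perm _ _).length_eq, List.length_cons, Nat.succ_le_succ_iff,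
      Nat.one_le_iff_ne_zero, Ne, List.length_eq_zero_iff]
    exact List.ne_nil_of_mem (mem_fib.2 ⟨hi, rfl⟩)
  · rw [(starPath_perm _ _).nodup_iff, List.nodup_cons]
    exact ⟨fun h => centre_notMem (mem_toList.1 hx) (mem_fib.1 h).1, nodup_toList _⟩
  · refine (nodup_toList _).pairwise_of_forall_ne fun x hx y hy hxy v hvx hvy => ?_
    rcases mem_starPath.1 hvx with rfl | ⟨hvI, rfl⟩ <;>
      rcases mem_starPath.1 hvy with rfl | ⟨hvI', rfl⟩
    · exact hxy rfl
    · exact centre_notMem (mem_toList.1 hx) hvI'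
    · exact centre_notMem (mem_toList.1 hy) hvI
    · exact hxy rfl
  · simp only [mem_union, mem_toList, mem_starPath]
    constructor
    · rintro (hv | hv)
      · exact ⟨φ v, mem_image_of_mem φ hv, .inr ⟨hv, rfl⟩⟩
      · exact ⟨v, hv, .inl rfl⟩
    · rintro ⟨x, hx, rfl | ⟨hv, -⟩⟩
      · exact .inr hx
      · exact .inl hv
  · exact ⟨starPath (φ i) (fib (φ i)),
      List.mem_map.2 ⟨φ i, mem_toList.2 (mem_image_of_mem φ hi), rfl⟩,
      starPath_head?_or_getLast? (length_fib _) (mem_fib.2 ⟨hi, rfl⟩)⟩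

lemma exists_maximal_matching (R : Finset V) :
    ∃ A ⊆ R, ∃ L, IsPathCover G A L ∧ (∀ a ∈ A, IsEndpoint L a) ∧
      ∀ u ∈ R \ A, ∀ w ∈ R \ A, ¬G.Adj u w := by
  induction R using Finset.strongInduction with
  | H R ih =>
  by_cases h : ∃ a ∈ R, ∃ b ∈ R, G.Adj a b
  · obtain ⟨a, ha, b, hb, hab⟩ := h
    have hab_R : {a, b} ⊆ R := by simp [insert_subset_iff, ha, hb]
    obtain ⟨A, hA, L, hL, hend, hind⟩ := ih (R \ {a, b}) (sdiff_ssubset hab_R (by simp))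
    refine ⟨{a, b} ∪ A, union_subset hab_R (hA.trans sdiff_subset), [a, b] :: L,
      (isPathCover_pair hab).append hL (disjoint_of_subset_right hA disjoint_sdiff), ?_, ?_⟩
    · intro v hv
      rcases mem_union.1 hv with hv | hv
      · exact ⟨[a, b], List.mem_cons_self, by simp at hv; rcases hv with rfl | rfl <;> simp⟩
      · obtain ⟨p, hp, hvp⟩ := hend v hv
        exact ⟨p, List.mem_cons_of_mem _ hp, hvp⟩
    · intro u hu w hw
      exact hind u (by simp at hu ⊢; tauto) w (by simp at hw ⊢; tauto)
  · push Not at h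
    exact ⟨∅, empty_subset R, [], isPathCover_nil, by simp,
      fun u hu w hw => h u (mem_sdiff.1 hu).1 w (mem_sdiff.1 hw).1⟩

lemma exists_isPathCover_of_card_isolatedIn_le {R : Finset V}
    (h : ∀ X ⊆ R, #(isolatedIn G (R \ X)) ≤ #X) : ∃ L, IsPathCover G R L := by
  obtain ⟨A, hAR, L, hL, hend, hind⟩ := exists_maximal_matching (G := G) R
  obtain ⟨g, hg, hgR⟩ := exists_injOn_forall_mem (R \ A) (fun u => {w ∈ R | G.Adj u w})
    fun s hs => (card_le_card (subset_isolatedIn_sdiff_biUnion (hs.trans sdiff_subset)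
      fun u hu v hv => hind u (hs hu) v (hs hv))).trans (h _ (biUnion_neighbors_subset R s))
  have hgA (u : V) (hu : u ∈ R \ A) : g u ∈ A := by
    obtain ⟨hgu, hadj⟩ := mem_filter.1 (hgR u hu)
    by_contra hgA
    exact hind u hu (g u) (mem_sdiff.2 ⟨hgu, hgA⟩) hadj
  obtain ⟨L', hL'⟩ := hL.exists_union_of_pendants disjoint_sdiff g hg
    (fun u hu => (mem_filter.1 (hgR u hu)).2) fun u hu => hend _ (hgA u hu)
  exact ⟨L', union_sdiff_of_subset hAR ▸ hL'⟩

def excess (G : SimpleGraph V) (R X : Finset V) : ℤ := #(isolatedIn G (R \ X)) - #X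

section MaximalExcess

variable {R X₀ : Finset V}

lemma card_isolatedIn_le_of_excess_le (hX₀ : X₀ ⊆ R)
    (hmax : ∀ X ⊆ R, excess G R X ≤ excess G R X₀) {X : Finset V}
    (hX : X ⊆ R \ (X₀ ∪ isolatedIn G (R \ X₀))) :
    #(isolatedIn G ((R \ (X₀ ∪ isolatedIn G (R \ X₀))) \ X)) ≤ #X := by
  set I := isolatedIn G (R \ X₀)
  have hsub : isolatedIn G ((R \ (X₀ ∪ I)) \ X) ∪ I ⊆ isolatedIn G (R \ (X ∪ X₀)) := by
    intro z hz
    have hX' := fun v (hv : v ∈ X) => mem_sdiff.1 (hX hv)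
    simp only [I, mem_union, mem_isolatedIn, mem_sdiff] at hz hX' ⊢
    grind [G.adj_symm]
  have hdisj : Disjoint (isolatedIn G ((R \ (X₀ ∪ I)) \ X)) I :=
    Finset.disjoint_left.2 fun z hz hzI => by simp_all [mem_isolatedIn]
  have hXX₀ : Disjoint X X₀ := Finset.disjoint_left.2 fun v hv hvX₀ => by simp_all [subset_iff]
  have := hmax (X ∪ X₀) (union_subset (hX.trans sdiff_subset) hX₀)
  have := card_le_card hsub
  rw [card_union_of_disjoint hdisj] at this
  simp only [excess, card_union_of_disjoint hXX₀, I] at *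
  push_cast at *
  omega

lemma card_le_card_biUnion_of_excess_le (hX₀ : X₀ ⊆ R)
    (hmax : ∀ X ⊆ R, excess G R X ≤ excess G R X₀) {s : Finset V} (hs : s ⊆ X₀) :
    #s ≤ #(s.biUnion fun x => {i ∈ isolatedIn G (R \ X₀) | G.Adj x i}) := by
  set Y := s.biUnion fun x => {i ∈ isolatedIn G (R \ X₀) | G.Adj x i}
  have hsub : isolatedIn G (R \ X₀) \ Y ⊆ isolatedIn G (R \ (X₀ \ s)) := by
    intro v hv
    simp only [Y, mem_sdiff, mem_isolatedIn, mem_biUnion, mem_filter] at hv ⊢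
    grind [G.adj_symm]
  have := hmax (X₀ \ s) (sdiff_subset.trans hX₀)
  have := card_le_card hsub
  have := card_le_card_sdiff_add_card (s := isolatedIn G (R \ X₀)) (t := Y)
  have := card_sdiff_add_card_eq_card hs
  simp only [excess] at *
  omega

lemma exists_isPathCover_union_isolatedIn (hX₀ : X₀ ⊆ R)
    (hmax : ∀ X ⊆ R, excess G R X ≤ excess G R X₀)
    (h : ∀ X ⊆ R, #(isolatedIn G (R \ X)) ≤ 2 * #X) :
    ∃ L, IsPathCover G (X₀ ∪ isolatedIn G (R \ X₀)) L := by
  set I := isolatedIn G (R \ X₀)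
  have hI {i : V} (hi : i ∈ I) : (i ∈ R ∧ i ∉ X₀) ∧ ∀ w ∈ R, w ∉ X₀ → ¬G.Adj i w := by
    simpa [I, mem_isolatedIn] using hi
  have hIX₀ : Disjoint I X₀ := Finset.disjoint_left.2 fun i hi => (hI hi).1.2
  obtain ⟨φ, hφ, hφfib⟩ := exists_forall_mem_card_fiber_le I (fun v => {w ∈ R | G.Adj v w}) 2
    fun s hs => (card_le_card (subset_isolatedIn_sdiff_biUnion (fun i hi => (hI (hs hi)).1.1)
      fun u hu v hv => (hI (hs hu)).2 v (hI (hs hv)).1.1 (hI (hs hv)).1.2)).trans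
      (h _ (biUnion_neighbors_subset R s))
  have hφX₀ (i : V) (hi : i ∈ I) : φ i ∈ X₀ := by
    obtain ⟨hφR, hadj⟩ := mem_filter.1 (hφ i hi)
    by_contra hφX₀
    exact (hI hi).2 _ hφR hφX₀ hadj
  obtain ⟨Ls, hLs, hend⟩ := exists_isPathCover_stars hIX₀ φ hφX₀
    (fun i hi => (mem_filter.1 (hφ i hi)).2) hφfib
  obtain ⟨ψ, hψ, hψI⟩ := exists_injOn_forall_mem X₀ (fun x => {i ∈ I | G.Adj x i})
    fun s hs => card_le_card_biUnion_of_excess_le hX₀ hmax hs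
  obtain ⟨L, hL⟩ := hLs.exists_union_of_pendants (B := X₀ \ I.image φ)
    (Finset.disjoint_left.2 fun v hv hvB => by
      rcases mem_union.1 hv with hvI | hvφ
      · exact Finset.disjoint_left.1 hIX₀ hvI (mem_sdiff.1 hvB).1
      · exact (mem_sdiff.1 hvB).2 hvφ)
    ψ (hψ.mono sdiff_subset) (fun b hb => (mem_filter.1 (hψI b (mem_sdiff.1 hb).1)).2)
    fun b hb => hend _ (mem_filter.1 (hψI b (mem_sdiff.1 hb).1)).1
  refine ⟨L, ?_⟩
  convert hL using 1
  ext v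
  simp only [mem_union, mem_sdiff, mem_image]
  grind

end MaximalExcess

theorem exists_isPathCover_of_card_isolatedIn_le_two_mul {R : Finset V}
    (h : ∀ X ⊆ R, #(isolatedIn G (R \ X)) ≤ 2 * #X) : ∃ L, IsPathCover G R L := by
  obtain ⟨X₀, hX₀, hmax⟩ := exists_max_image R.powerset (excess G R) ⟨∅, empty_mem_powerset R⟩
  rw [mem_powerset] at hX₀
  replace hmax (X : Finset V) (hX : X ⊆ R) : excess G R X ≤ excess G R X₀ :=
    hmax X (mem_powerset.2 hX)
  have hR : X₀ ∪ isolatedIn G (R \ X₀) ⊆ R :=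
    union_subset hX₀ ((filter_subset _ _).trans sdiff_subset)
  obtain ⟨L₁, hL₁⟩ := exists_isPathCover_union_isolatedIn hX₀ hmax h
  obtain ⟨L₂, hL₂⟩ := exists_isPathCover_of_card_isolatedIn_le fun X hX =>
    card_isolatedIn_le_of_excess_le hX₀ hmax hX
  exact ⟨L₁ ++ L₂, union_sdiff_of_subset hR ▸ hL₁.append hL₂ disjoint_sdiff⟩

def graphOfPaths (L : List (List V)) : SimpleGraph V :=
  SimpleGraph.fromRel fun u v => ∃ p ∈ L, ∃ i, ∃ h : i + 1 < p.length, p[i] = u ∧ p[i + 1] = v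

namespace IsPathCover

variable {R : Finset V} {L : List (List V)}

lemma graphOfPaths_le (hL : IsPathCover G R L) : graphOfPaths L ≤ G := by
  have hadj {p : List V} (hp : p ∈ L) {i : ℕ} (h : i + 1 < p.length) : G.Adj p[i] p[i + 1] :=
    List.isChain_iff_getElem.1 (hL.isChain p hp) i h
  rintro u v ⟨-, ⟨p, hp, i, h, rfl, rfl⟩ | ⟨p, hp, i, h, rfl, rfl⟩⟩
  · exact hadj hp h
  · exact (hadj hp h).symm

lemma adj_getElem_iff (hL : IsPathCover G R L) {p : List V} (hp : p ∈ L) {i j : ℕ}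
    (hi : i < p.length) (hj : j < p.length) :
    (graphOfPaths L).Adj p[i] p[j] ↔ i + 1 = j ∨ j + 1 = i := by
  have hnd := hL.nodup_of_mem hp
  constructor
  · rintro ⟨-, ⟨q, hq, k, hk, hki, hkj⟩ | ⟨q, hq, k, hk, hkj, hki⟩⟩ <;>
    · obtain rfl := hL.eq_of_mem hq hp (hki ▸ List.getElem_mem _) (List.getElem_mem hi)
      rw [hnd.getElem_inj_iff] at hki hkj
      omega
  · rintro (rfl | rfl)
    · exact ⟨fun h => by simp [hnd.getElem_inj_iff] at h, .inl ⟨p, hp, i, hj, rfl, rfl⟩⟩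
    · exact ⟨fun h => by simp [hnd.getElem_inj_iff] at h, .inr ⟨p, hp, j, hi, rfl, rfl⟩⟩

lemma mem_of_adj (hL : IsPathCover G R L) {p : List V} (hp : p ∈ L) {u v : V} (hu : u ∈ p)
    (huv : (graphOfPaths L).Adj u v) : v ∈ p := by
  obtain ⟨-, ⟨q, hq, k, hk, rfl, rfl⟩ | ⟨q, hq, k, hk, rfl, rfl⟩⟩ := huv <;>
  · obtain rfl := hL.eq_of_mem hq hp (List.getElem_mem _) hu
    exact List.getElem_mem _

lemma reachable_iff_mem (hL : IsPathCover G R L) {p : List V} (hp : p ∈ L) {u v : V}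
    (hu : u ∈ p) : (graphOfPaths L).Reachable u v ↔ v ∈ p := by
  constructor
  · rintro ⟨w⟩
    induction w with
    | nil => exact hu
    | cons huv _ ih => exact ih (hL.mem_of_adj hp hu huv)
  · intro hv
    have hfirst (j : ℕ) (hj : j < p.length) :
        (graphOfPaths L).Reachable p[0] p[j] := by
      induction j with
      | zero => rfl
      | succ j ih =>
        exact (ih (by omega)).trans ((hL.adj_getElem_iff hp (by omega) hj).2 (.inl rfl)).reachable
    obtain ⟨i, hi, rfl⟩ := List.mem_iff_getElem.1 hu
    obtain ⟨j, hj, rfl⟩ := List.mem_iff_getElem.1 hv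
    exact (hfirst i hi).symm.trans (hfirst j hj)

lemma hasPathFactor [Fintype V] (hL : IsPathCover G univ L) : HasPathFactor G 2 := by
  refine ⟨graphOfPaths L, hL.graphOfPaths_le, fun C => ?_⟩
  induction C using ConnectedComponent.ind with | h v =>
  obtain ⟨p, hp, hvp⟩ := List.mem_flatten.1 (hL.mem_flatten.2 (mem_univ v))
  have hsupp : ((graphOfPaths L).connectedComponentMk v).supp = {w | w ∈ p} := by
    ext w
    rw [ConnectedComponent.mem_supp_iff, ConnectedComponent.eq, reachable_comm]
    exact hL.reachable_iff_mem hp hvp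
  refine ⟨p.length, hL.two_le_length p hp, ⟨?_⟩⟩
  rw [hsupp]
  exact RelIso.symm
    { toEquiv := List.Nodup.getEquiv p (hL.nodup_of_mem hp)
      map_rel_iff' := fun {i j} => by
        simpa [pathGraph_adj] using hL.adj_getElem_iff hp i.2 j.2 }

end IsPathCover

lemma exists_pathGraph_adj {m : ℕ} (hm : 2 ≤ m) (j : Fin m) : ∃ k, (pathGraph m).Adj j k := by
  by_cases hj : (j : ℕ) + 1 < m
  · exact ⟨⟨j + 1, hj⟩, pathGraph_adj.2 (.inl rfl)⟩
  · exact ⟨⟨j - 1, by omega⟩, pathGraph_adj.2 (.inr (by simp only; omega))⟩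

lemma exists_adj_and_card_adj_le_two [Fintype V] {F : SimpleGraph V}
    (hF : ∀ C : F.ConnectedComponent, ∃ m, 2 ≤ m ∧ Nonempty (F.induce C.supp ≃g pathGraph m))
    (v : V) : (∃ w, F.Adj v w) ∧ #{w | F.Adj v w} ≤ 2 := by
  obtain ⟨m, hm, ⟨φ⟩⟩ := hF (F.connectedComponentMk v)
  have hv : v ∈ (F.connectedComponentMk v).supp := rfl
  have hsupp {w : V} (hw : F.Adj v w) : w ∈ (F.connectedComponentMk v).supp :=
    ConnectedComponent.eq.2 hw.reachable.symm
  constructor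
  · obtain ⟨k, hk⟩ := exists_pathGraph_adj hm (φ ⟨v, hv⟩)
    exact ⟨φ.symm k, by simpa using φ.symm.map_rel_iff.2 hk⟩
  · let ψ : V → ℕ := fun w => if hw : w ∈ (F.connectedComponentMk v).supp then φ ⟨w, hw⟩ else 0
    have hψ {w : V} (hw : F.Adj v w) : ψ v + 1 = ψ w ∨ ψ w + 1 = ψ v := by
      rw [show ψ v = φ ⟨v, hv⟩ from dif_pos hv, show ψ w = φ ⟨w, hsupp hw⟩ from dif_pos _]
      exact pathGraph_adj.1 (φ.map_rel_iff.2 hw)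
    calc #{w | F.Adj v w} ≤ #({ψ v - 1, ψ v + 1} : Finset ℕ) := by
          refine card_le_card_of_injOn ψ (fun w hw => ?_) fun w hw w' hw' hww' => ?_
          · have := hψ (mem_filter.1 hw).2
            simp only [coe_insert, coe_singleton, Set.mem_insert_iff, Set.mem_singleton_iff]
            omega
          · have hw := hsupp (mem_filter.1 hw).2
            have hw' := hsupp (mem_filter.1 hw').2
            simp only [ψ, hw, hw', dite_true] at hww'
            exact congrArg Subtype.val (φ.injective (Fin.ext hww'))
      _ ≤ 2 := card_le_two

lemma card_isolatedIn_compl_le [Fintype V] {F : SimpleGraph V} (hFG : F ≤ G) {k : ℕ}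
    (hex : ∀ v, ∃ w, F.Adj v w) (hdeg : ∀ v, #{w | F.Adj v w} ≤ k) (X : Finset V) :
    #(isolatedIn G Xᶜ) ≤ k * #X := by
  choose f hf using hex
  refine card_le_mul_card_image_of_maps_to (f := f) (fun v hv => ?_) k fun x _ => ?_
  · by_contra hfX
    exact (mem_isolatedIn.1 hv).2 (f v) (mem_compl.2 hfX) (hFG (hf v))
  · refine (card_le_card fun v hv => ?_).trans (hdeg x)
    obtain ⟨-, rfl⟩ := mem_filter.1 hv
    exact mem_filter.2 ⟨mem_univ _, (hf v).symm⟩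

theorem hasPathFactor_two_iff [Fintype V] :
    HasPathFactor G 2 ↔ ∀ X : Finset V, #(isolatedIn G Xᶜ) ≤ 2 * #X := by
  refine ⟨fun ⟨F, hFG, hF⟩ => card_isolatedIn_compl_le hFG
    (fun v => (exists_adj_and_card_adj_le_two hF v).1)
    (fun v => (exists_adj_and_card_adj_le_two hF v).2), fun h => ?_⟩
  obtain ⟨L, hL⟩ := exists_isPathCover_of_card_isolatedIn_le_two_mul (R := univ) fun X _ => by
    simpa [← compl_eq_univ_sdiff] using h X
  exact hL.hasPathFactor

theorem forall_isolCount_le_iff [Fintype V] (k : ℕ) :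
    (∀ X : Set V, isolCount (G.induce Xᶜ) ≤ k * Nat.card X) ↔
      ∀ X : Finset V, #(isolatedIn G Xᶜ) ≤ k * #X := by
  refine ⟨fun h X => ?_, fun h X => ?_⟩
  · have := h X
    rwa [← coe_compl, isolCount_induce_eq_card_isolatedIn, Nat.card_coe_set_eq,
      Set.ncard_coe_finset] at this
  · have := h X.toFinset
    rwa [← isolCount_induce_eq_card_isolatedIn, coe_compl, Set.coe_toFinset,
      ← Nat.card_eq_card_toFinset] at this

end SimpleGraph

end

/-- Theorem 1 (Las Vergnas): `G` has a `P_{≥2}`-factor iff `i(G−X) ≤ 2|X|` for every `X`. -/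
theorem stmt0 {V : Type*} [Fintype V] (G : SimpleGraph V) :
    HasPathFactor G 2 ↔
      ∀ X : Set V, isolCount (G.induce (Xᶜ : Set V)) ≤ 2 * Nat.card X :=
  G.hasPathFactor_two_iff.trans (G.forall_isolCount_le_iff 2).symm
end

section
/- Let n, r be nonnegative integers, G an (n+r+2)-connected non-complete graph with I(G) > (n+r+3)/(2(r+2)), let W ⊆ V(G) with |W| = n, let e ∈ E(G−W), and set H = G−W−e. If X ⊆ V(H) satisfies i(H−X) ≥ 2|X|+1, then |X| ≥ r+2. -/
/-!
An isolated vertex `v` of `H - X` has all its `G`-neighbours in `W ∪ X`, together with the other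
end of `e` when `v` lies on `e`. As `G` has minimum degree at least `n + r + 2`, this gives
`|X| ≥ r + 1`, so `H - X` has at least `2r + 3 ≥ 3` isolated vertices. One of them avoids both
ends of `e`, and for it the same count gives `|X| ≥ r + 2`.
-/

open SimpleGraph

namespace SimpleGraph

variable {V : Type*} {G : SimpleGraph V}

theorem IsKConnected.finite {k : ℕ} (h : IsKConnected G k) : Finite V :=
  Nat.finite_of_card_ne_zero (Nat.ne_zero_of_lt h.1)

/-- Deleting the neighbourhood of `v` would leave `v` cut off from the remaining vertices. -/
theorem IsKConnected.le_ncard_neighborSet {k : ℕ} (h : IsKConnected G k) (v : V) :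
    k ≤ (G.neighborSet v).ncard := by
  have := h.finite
  by_contra! hlt
  set S := G.neighborSet v
  have hv : v ∈ Sᶜ := by simp [S]
  have hSc : 1 < Sᶜ.ncard := by
    have := Set.ncard_add_ncard_compl S
    have := h.1
    omega
  obtain ⟨u, hu, hne⟩ := Set.exists_ne_of_one_lt_ncard hSc v
  obtain ⟨p⟩ := (h.2 S (by rwa [Nat.card_coe_set_eq])).preconnected ⟨v, hv⟩ ⟨u, hu⟩
  have hadj := p.adj_snd (Walk.not_nil_of_ne (by simpa using hne.symm))
  exact (p.getVert 1).2 hadj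

theorem ncard_neighborSet_le_add_induce_compl [Finite V] (W : Set V) (u : ↥Wᶜ) :
    (G.neighborSet u).ncard ≤ W.ncard + ((G.induce Wᶜ).neighborSet u).ncard := by
  have hsub : G.neighborSet u ⊆ W ∪ Subtype.val '' (G.induce Wᶜ).neighborSet u := by
    intro w hw
    by_cases hwW : w ∈ W
    · exact Or.inl hwW
    · exact Or.inr ⟨⟨w, hwW⟩, hw, rfl⟩
  calc (G.neighborSet u).ncard
      ≤ (W ∪ Subtype.val '' (G.induce Wᶜ).neighborSet u).ncard := Set.ncard_le_ncard hsub
    _ ≤ W.ncard + (Subtype.val '' (G.induce Wᶜ).neighborSet u).ncard := Set.ncard_union_le _ _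
    _ = W.ncard + ((G.induce Wᶜ).neighborSet u).ncard := by
      rw [Set.ncard_image_of_injective _ Subtype.val_injective]

theorem neighborSet_deleteEdges_singleton_of_notMem {e : Sym2 V} {v : V} (hv : v ∉ e) :
    (G.deleteEdges {e}).neighborSet v = G.neighborSet v := by
  ext w
  simp only [mem_neighborSet, deleteEdges_adj, Set.mem_singleton_iff, and_iff_left_iff_imp]
  rintro - rfl
  exact hv (Sym2.mem_mk_left v w)

theorem ncard_neighborSet_le_deleteEdges_singleton_add_one [Finite V] (e : Sym2 V) (v : V) :
    (G.neighborSet v).ncard ≤ ((G.deleteEdges {e}).neighborSet v).ncard + 1 := by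
  have hsub : G.neighborSet v ⊆ (G.deleteEdges {e}).neighborSet v ∪ {w | s(v, w) = e} := by
    intro w hw
    by_cases hvw : s(v, w) = e
    · exact Or.inr hvw
    · exact Or.inl (by simpa [hvw] using hw)
  have hpartner : {w | s(v, w) = e}.ncard ≤ 1 :=
    (Set.ncard_le_one).2 fun a ha b hb => Sym2.congr_right.1 (ha.trans hb.symm)
  calc (G.neighborSet v).ncard
      ≤ ((G.deleteEdges {e}).neighborSet v ∪ {w | s(v, w) = e}).ncard := Set.ncard_le_ncard hsub
    _ ≤ ((G.deleteEdges {e}).neighborSet v).ncard + {w | s(v, w) = e}.ncard :=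
      Set.ncard_union_le _ _
    _ ≤ ((G.deleteEdges {e}).neighborSet v).ncard + 1 := by omega

theorem neighborSet_subset_of_isolated_induce_compl {X : Set V} {v : ↥Xᶜ}
    (hv : ∀ w, ¬ (G.induce Xᶜ).Adj v w) : G.neighborSet v ⊆ X := by
  intro w hw
  by_contra hwX
  exact hv ⟨w, hwX⟩ hw

end SimpleGraph

theorem Sym2.ncard_preimage_le_two {α β : Type*} {f : α → β} (hf : f.Injective) (e : Sym2 β) :
    {x | f x ∈ e}.ncard ≤ 2 := by
  induction e using Sym2.ind with
  | h a b =>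
    calc {x | f x ∈ s(a, b)}.ncard
        ≤ ({a, b} : Set β).ncard :=
          Set.ncard_le_ncard_of_injOn f (fun x hx => by simpa using hx) hf.injOn
      _ ≤ ({b} : Set β).ncard + 1 := Set.ncard_insert_le a {b}
      _ = 2 := by rw [Set.ncard_singleton]

theorem stmt2_general {V : Type*} (n r : ℕ) (G : SimpleGraph V)
    (hconn : IsKConnected G (n + r + 2))
    (W : Set V) (hW : Nat.card W = n)
    (e : Sym2 ↥(Wᶜ))
    (X : Set ↥(Wᶜ))
    (hX : 2 * Nat.card X + 1 ≤
      isolCount (((G.induce (Wᶜ : Set V)).deleteEdges {e}).induce (Xᶜ : Set ↥(Wᶜ)))) :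
    r + 2 ≤ Nat.card X := by
  have := hconn.finite
  set I := {v : ↥Xᶜ | ∀ w, ¬ (((G.induce Wᶜ).deleteEdges {e}).induce Xᶜ).Adj v w}
  rw [Nat.card_coe_set_eq] at hW ⊢
  have hI : 2 * X.ncard + 1 ≤ I.ncard := by
    rwa [isolCount, Nat.card_coe_set_eq] at hX
  have hdeg (v : ↥Xᶜ) : n + r + 2 ≤ n + ((G.induce Wᶜ).neighborSet v).ncard :=
    hW ▸ (hconn.le_ncard_neighborSet _).trans (ncard_neighborSet_le_add_induce_compl W v)
  have hiso (v : ↥Xᶜ) (hv : v ∈ I) :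
      (((G.induce Wᶜ).deleteEdges {e}).neighborSet v).ncard ≤ X.ncard :=
    Set.ncard_le_ncard (neighborSet_subset_of_isolated_induce_compl hv)
  obtain ⟨v₀, hv₀⟩ : I.Nonempty := Set.nonempty_of_ncard_ne_zero (by omega)
  have hX₁ : r + 1 ≤ X.ncard := by
    have := ncard_neighborSet_le_deleteEdges_singleton_add_one (G := G.induce Wᶜ) e (v₀ : ↥Wᶜ)
    have := hdeg v₀
    have := hiso v₀ hv₀
    omega
  obtain ⟨v, hvI, hve⟩ : ∃ v ∈ I, (v : ↥Wᶜ) ∉ e := by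
    by_contra! hIe
    have := (Set.ncard_le_ncard hIe).trans (Sym2.ncard_preimage_le_two Subtype.val_injective e)
    omega
  have := hdeg v
  have := hiso v hvI
  rw [neighborSet_deleteEdges_singleton_of_notMem hve] at this
  omega

/-- Claim 1 in Theorem 6: if `i(H−X) ≥ 2|X|+1` for `H = G−W−e`, then `|X| ≥ r+2`. -/
theorem stmt2 {V : Type*} [Fintype V] (n r : ℕ) (G : SimpleGraph V) (hnc : G ≠ ⊤)
    (hconn : IsKConnected G (n + r + 2))
    (hI : isolatedToughness G > ((n : ENNReal) + r + 3) / (2 * ((r : ENNReal) + 2)))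
    (W : Set V) (hW : Nat.card W = n)
    (e : Sym2 ↥(Wᶜ)) (he : e ∈ (G.induce (Wᶜ : Set V)).edgeSet)
    (X : Set ↥(Wᶜ))
    (hX : 2 * Nat.card X + 1 ≤
      isolCount (((G.induce (Wᶜ : Set V)).deleteEdges {e}).induce (Xᶜ : Set ↥(Wᶜ)))) :
    r + 2 ≤ Nat.card X :=
  stmt2_general n r G hconn W hW e X hX
end

section
/- Let n ≥ r+1 ≥ 1 with r ≥ 0, and let G = K_{n+r+2} + ((2r+3)K_1 ∪ K_2) (the join of a complete graph on n+r+2 vertices with the disjoint union of 2r+3 isolated vertices and one edge). Then G is (n+r+2)-connected, I(G) = (n+r+3)/(2(r+2)), and G is not (P_{≥2},n)-factor critical avoidable. -/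
open SimpleGraph

/-!
Every clique vertex of `K_N + (m K₁ ∪ K₂)` is adjacent to all other vertices. Hence deleting
fewer than `N` vertices leaves one of them and the rest stays connected, and a set `X` leaving at
least two isolated vertices must contain the whole clique. Then `|X| + i(G - X) ≤ N + m + 2`, and
even `≤ N + m` when `X` misses both ends of the `K₂`, since these stay adjacent; for `m ≤ N` both
bounds give `|X| / i(G - X) ≥ (N + 1) / (m + 1)`, attained by the clique plus one end of the `K₂`.

After deleting `n` clique vertices and the edge of the `K₂`, each of the `m + 2` other vertices
has all its neighbours among the `N - n` remaining clique vertices. In a path factor each of them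
needs such a neighbour while no vertex has more than two, so `m + 2 ≤ 2 (N - n)`, which fails here.
-/

section Adjacency

variable {α β : Type*} {G : SimpleGraph α} {H : SimpleGraph β}

@[simp] lemma graphJoin_adj_inl_inl {a b : α} :
    (graphJoin G H).Adj (Sum.inl a) (Sum.inl b) ↔ G.Adj a b := Iff.rfl

@[simp] lemma graphJoin_adj_inr_inr {a b : β} :
    (graphJoin G H).Adj (Sum.inr a) (Sum.inr b) ↔ H.Adj a b := Iff.rfl

@[simp] lemma graphJoin_adj_inr_inl {a : β} {b : α} :
    (graphJoin G H).Adj (Sum.inr a) (Sum.inl b) := trivial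

@[simp] lemma disjUnion_adj_inl_inl {a b : α} :
    (disjUnion G H).Adj (Sum.inl a) (Sum.inl b) ↔ G.Adj a b := Iff.rfl

@[simp] lemma disjUnion_adj_inr_inr {a b : β} :
    (disjUnion G H).Adj (Sum.inr a) (Sum.inr b) ↔ H.Adj a b := Iff.rfl

@[simp] lemma not_disjUnion_adj_inl_inr {a : α} {b : β} :
    ¬ (disjUnion G H).Adj (Sum.inl a) (Sum.inr b) := id

@[simp] lemma not_disjUnion_adj_inr_inl {a : β} {b : α} :
    ¬ (disjUnion G H).Adj (Sum.inr a) (Sum.inl b) := id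

lemma graphJoin_top_adj_inl {x : α ⊕ β} {a : α} (hx : x ≠ Sum.inl a) :
    (graphJoin (⊤ : SimpleGraph α) H).Adj x (Sum.inl a) := by
  rcases x with b | b
  · simpa using hx
  · simp

end Adjacency

section UniversalVertex

variable {V : Type*} {G : SimpleGraph V}

lemma connected_of_forall_adj (u : V) (hu : ∀ w ≠ u, G.Adj w u) : G.Connected := by
  have hreach : ∀ w, G.Reachable w u := fun w => by
    by_cases hw : w = u
    · rw [hw]
    · exact (hu w hw).reachable
  exact (connected_iff_exists_forall_reachable G).mpr ⟨u, fun w => (hreach w).symm⟩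

lemma isolCount_le_one_of_forall_adj [Finite V] (u : V) (hu : ∀ w ≠ u, G.Adj w u) :
    isolCount G ≤ 1 := by
  have hiso : ∀ v : {v : V // ∀ w, ¬ G.Adj v w}, v.1 = u := fun v => by
    by_contra hv
    exact v.2 u (hu v.1 hv)
  refine Finite.card_le_one_iff_subsingleton.mpr ⟨fun v w => Subtype.ext ?_⟩
  rw [hiso v, hiso w]

lemma induce_adj_of_forall_adj {s : Set V} {u : V} (hus : u ∈ s) (hu : ∀ w ≠ u, G.Adj w u) :
    ∀ w ≠ (⟨u, hus⟩ : s), (G.induce s).Adj w ⟨u, hus⟩ :=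
  fun w hw => hu w.1 fun h => hw (Subtype.ext h)

end UniversalVertex

lemma isKConnected_graphJoin_top {α β : Type*} [Finite α] [Finite β] [Nonempty β]
    (H : SimpleGraph β) : IsKConnected (graphJoin (⊤ : SimpleGraph α) H) (Nat.card α) := by
  refine ⟨by simp [Nat.card_sum], fun S hS => ?_⟩
  obtain ⟨a, ha⟩ : ∃ a, Sum.inl a ∉ S := by
    by_contra! hall
    have : Nat.card α ≤ Nat.card S := Nat.card_le_card_of_injective (fun a => ⟨Sum.inl a, hall a⟩)
      fun a b hab => Sum.inl_injective (congrArg Subtype.val hab)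
    omega
  exact connected_of_forall_adj _ (induce_adj_of_forall_adj (s := Sᶜ) ha
    fun _ => graphJoin_top_adj_inl)

lemma ENNReal.natCast_div_le_natCast_div {a b c d : ℕ} (hb : b ≠ 0) (hd : d ≠ 0)
    (h : a * d ≤ c * b) : (a : ENNReal) / b ≤ (c : ENNReal) / d := by
  rw [ENNReal.le_div_iff_mul_le (Or.inl (by exact_mod_cast hd)) (Or.inl (ENNReal.natCast_ne_top d)),
    ← ENNReal.mul_div_right_comm,
    ENNReal.div_le_iff (by exact_mod_cast hb) (ENNReal.natCast_ne_top b)]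
  exact_mod_cast h

section IsolatedVertices

variable {V : Type*} {G : SimpleGraph V}

lemma isolCount_le_card [Finite V] : isolCount G ≤ Nat.card V := Finite.card_subtype_le _

lemma isolCount_add_two_le_card [Finite V] {v w : V} (h : G.Adj v w) :
    isolCount G + 2 ≤ Nat.card V := by
  have hdisj : Disjoint {x | ∀ y, ¬ G.Adj x y} {v, w} := by
    simp only [Set.disjoint_insert_right, Set.disjoint_singleton_right, Set.mem_ofPred_eq,
      not_forall, not_not]
    exact ⟨⟨w, h⟩, ⟨v, h.symm⟩⟩
  calc isolCount G + 2 = ({x | ∀ y, ¬ G.Adj x y} ∪ {v, w}).ncard := by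
        rw [Set.ncard_union_eq hdisj, Set.ncard_pair h.ne]; rfl
    _ ≤ Nat.card V := Set.ncard_le_card _

lemma isolCount_eq_card_of_forall_not_adj (h : ∀ v w, ¬ G.Adj v w) : isolCount G = Nat.card V :=
  Nat.card_congr (Equiv.subtypeUnivEquiv h)

lemma isolatedToughness_eq_div {a b : ℕ} (X₀ : Set V) (hX₀ : Nat.card X₀ = a)
    (hi : isolCount (G.induce X₀ᶜ) = b) (hb : 2 ≤ b)
    (hle : ∀ X : Set V, 2 ≤ isolCount (G.induce Xᶜ) →
      a * isolCount (G.induce Xᶜ) ≤ Nat.card X * b) :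
    isolatedToughness G = a / b := by
  refine le_antisymm (iInf_le_of_le ⟨X₀, hi ▸ hb⟩ (by rw [hX₀, hi])) (le_iInf fun X => ?_)
  exact ENNReal.natCast_div_le_natCast_div (by omega) (by have := X.2; omega) (hle X.1 X.2)

end IsolatedVertices

section PathFactor

lemma pathGraph_exists_adj {m : ℕ} (hm : 2 ≤ m) (i : Fin m) : ∃ j, (pathGraph m).Adj i j := by
  by_cases hi : (i : ℕ) + 1 < m
  · exact ⟨⟨i + 1, hi⟩, pathGraph_adj.mpr (Or.inl rfl)⟩
  · exact ⟨⟨i - 1, by omega⟩, pathGraph_adj.mpr (Or.inr (by simp only; omega))⟩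

lemma pathGraph_eq_or_eq_or_eq_of_adj {m : ℕ} {i x y z : Fin m} (hx : (pathGraph m).Adj i x)
    (hy : (pathGraph m).Adj i y) (hz : (pathGraph m).Adj i z) : x = y ∨ x = z ∨ y = z := by
  rw [pathGraph_adj] at hx hy hz
  simp only [← Fin.val_inj]
  omega

variable {V : Type*} {F : SimpleGraph V}

lemma exists_adj_of_forall_iso_pathGraph
    (hF : ∀ C : F.ConnectedComponent, ∃ m, 2 ≤ m ∧ Nonempty ((F.induce C.supp) ≃g pathGraph m))
    (v : V) : ∃ w, F.Adj v w := by
  obtain ⟨m, hm, ⟨φ⟩⟩ := hF (F.connectedComponentMk v)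
  let v' : (F.connectedComponentMk v).supp := ⟨v, ConnectedComponent.connectedComponentMk_mem⟩
  obtain ⟨j, hj⟩ := pathGraph_exists_adj hm (φ v')
  have : (F.induce _).Adj v' (φ.symm j) := φ.map_adj_iff.mp (by rwa [φ.apply_symm_apply])
  exact ⟨φ.symm j, this⟩

lemma eq_or_eq_or_eq_of_forall_iso_pathGraph {k : ℕ}
    (hF : ∀ C : F.ConnectedComponent, ∃ m, k ≤ m ∧ Nonempty ((F.induce C.supp) ≃g pathGraph m))
    {v x y z : V} (hx : F.Adj v x) (hy : F.Adj v y) (hz : F.Adj v z) :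
    x = y ∨ x = z ∨ y = z := by
  obtain ⟨m, -, ⟨φ⟩⟩ := hF (F.connectedComponentMk v)
  have hv : v ∈ (F.connectedComponentMk v).supp := ConnectedComponent.connectedComponentMk_mem
  have hmap : ∀ {w} (hw : F.Adj v w), (pathGraph m).Adj (φ ⟨v, hv⟩)
      (φ ⟨w, (ConnectedComponent.connectedComponentMk_eq_of_adj hw).symm⟩) :=
    fun hw => φ.map_adj_iff.mpr hw
  have hval : ∀ {a b : (F.connectedComponentMk v).supp}, φ a = φ b → a.1 = b.1 :=
    fun h => congrArg Subtype.val (φ.injective h)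
  rcases pathGraph_eq_or_eq_or_eq_of_adj (hmap hx) (hmap hy) (hmap hz) with h | h | h
  exacts [Or.inl (hval h), Or.inr (Or.inl (hval h)), Or.inr (Or.inr (hval h))]

lemma card_le_two_mul_card_of_hasPathFactor [DecidableEq V] {G : SimpleGraph V}
    (hG : HasPathFactor G 2) (I K : Finset V) (hIK : ∀ v ∈ I, ∀ w, G.Adj v w → w ∈ K) :
    I.card ≤ 2 * K.card := by
  obtain ⟨F, hFG, hF⟩ := hG
  choose g hg using exists_adj_of_forall_iso_pathGraph hF
  refine Finset.card_le_mul_card_image_of_maps_to (f := g)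
    (fun v hv => hIK v hv _ (hFG (hg v))) 2 fun k _ => ?_
  by_contra! hcard
  obtain ⟨x, y, z, hx, hy, hz, hxy, hxz, hyz⟩ := Finset.two_lt_card_iff.mp hcard
  simp only [Finset.mem_filter] at hx hy hz
  have hadj : ∀ {u}, g u = k → F.Adj k u := fun hu => hu ▸ (hg _).symm
  rcases eq_or_eq_or_eq_of_forall_iso_pathGraph hF (hadj hx.2) (hadj hy.2) (hadj hz.2)
    with h | h | h
  exacts [hxy h, hxz h, hyz h]

end PathFactor

section CliqueJoin

variable {α β : Type*}

/-- The graph `K_α + (β K₁ ∪ K₂)`. -/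
abbrev cliqueJoinIsolatedK2 (α β : Type*) : SimpleGraph (α ⊕ β ⊕ Fin 2) :=
  graphJoin ⊤ (disjUnion ⊥ ⊤)

lemma not_pathFactorCriticalAvoidable_cliqueJoinIsolatedK2 [Fintype α] [Fintype β] (n : ℕ)
    (hn : n ≤ Fintype.card α) (hcard : 2 * (Fintype.card α - n) < Fintype.card β + 2) :
    ¬ PathFactorCriticalAvoidable (cliqueJoinIsolatedK2 α β) 2 n := by
  classical
  intro hPF
  obtain ⟨A, -, hA⟩ := Finset.exists_subset_card_eq (s := Finset.univ) (n := n) (by simpa using hn)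
  set W : Set (α ⊕ β ⊕ Fin 2) := Sum.inl '' ↑A
  have hW : Nat.card W = n := by
    rw [Nat.card_coe_set_eq, Set.ncard_image_of_injective _ Sum.inl_injective,
      Set.ncard_coe_finset, hA]
  have hinr : ∀ p, Sum.inr p ∉ W := by simp [W]
  let c : Fin 2 → ↥Wᶜ := fun j => ⟨Sum.inr (Sum.inr j), hinr _⟩
  have he : s(c 0, c 1) ∈ ((cliqueJoinIsolatedK2 α β).induce Wᶜ).edgeSet := by simp [c]
  let I : Finset ↥Wᶜ := Finset.univ.filter fun x => x.1.isRight
  let K : Finset ↥Wᶜ := Finset.univ.filter fun x => x.1.isLeft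
  have hIK := card_le_two_mul_card_of_hasPathFactor (hPF W hW _ he) I K ?_
  · have hI : Fintype.card β + 2 ≤ I.card := by
      calc Fintype.card β + 2 = (Finset.univ.map ⟨Sum.inr, Sum.inr_injective⟩ :
            Finset (α ⊕ β ⊕ Fin 2)).card := by simp
        _ ≤ (I.map (Function.Embedding.subtype _)).card := Finset.card_le_card ?_
        _ = I.card := Finset.card_map _
      intro y hy
      obtain ⟨p, -, rfl⟩ := Finset.mem_map.mp hy
      exact Finset.mem_map.mpr ⟨⟨Sum.inr p, hinr p⟩, by simp [I], rfl⟩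
    have hK : K.card ≤ Fintype.card α - n := by
      calc K.card = (K.map (Function.Embedding.subtype _)).card := (Finset.card_map _).symm
        _ ≤ (Aᶜ.map ⟨Sum.inl, Sum.inl_injective⟩).card := Finset.card_le_card ?_
        _ = Fintype.card α - n := by simp [Finset.card_compl, hA]
      rintro (a | p) hy <;> simp [K, W] at hy ⊢
      exact hy
    omega
  · rintro ⟨v | p, hv⟩ hvI ⟨w | q, hw⟩ hadj
    · simp [I] at hvI
    · simp [I] at hvI
    · simp [K]
    rw [deleteEdges_adj, induce_adj] at hadj
    rcases p with b | j <;> rcases q with b' | k <;> simp at hadj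
    fin_cases j <;> fin_cases k <;> simp [c] at hadj

lemma graphJoin_top_inl_mem_of_two_le_isolCount [Finite α] [Finite β] {H : SimpleGraph β}
    {X : Set (α ⊕ β)} (hX : 2 ≤ isolCount ((graphJoin (⊤ : SimpleGraph α) H).induce Xᶜ))
    (a : α) : Sum.inl a ∈ X := by
  by_contra ha
  have := isolCount_le_one_of_forall_adj (G := (graphJoin (⊤ : SimpleGraph α) H).induce Xᶜ) _
    (induce_adj_of_forall_adj ha fun _ => graphJoin_top_adj_inl)
  omega

lemma ncard_insert_inr_range_inl {γ : Type*} [Finite α] (y : γ) :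
    (insert (Sum.inr y) (Set.range (Sum.inl : α → α ⊕ γ))).ncard = Nat.card α + 1 := by
  rw [Set.ncard_insert_of_notMem (by simp), Set.ncard_range_of_injective Sum.inl_injective]

lemma card_add_card_compl_cliqueJoinIsolatedK2 [Finite α] [Finite β] (X : Set (α ⊕ β ⊕ Fin 2)) :
    Nat.card X + Nat.card ↥Xᶜ = Nat.card α + Nat.card β + 2 := by
  rw [Nat.card_coe_set_eq, Nat.card_coe_set_eq, Set.ncard_add_ncard_compl, Nat.card_sum,
    Nat.card_sum, Nat.card_fin, add_assoc]

lemma add_one_mul_isolCount_le [Finite α] [Finite β] (hβα : Nat.card β ≤ Nat.card α)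
    {X : Set (α ⊕ β ⊕ Fin 2)} (hX : 2 ≤ isolCount ((cliqueJoinIsolatedK2 α β).induce Xᶜ)) :
    (Nat.card α + 1) * isolCount ((cliqueJoinIsolatedK2 α β).induce Xᶜ) ≤
      Nat.card X * (Nat.card β + 1) := by
  have hinl := graphJoin_top_inl_mem_of_two_le_isolCount hX
  have htot := card_add_card_compl_cliqueJoinIsolatedK2 X
  have hα : Nat.card α ≤ Nat.card X := by
    rw [Nat.card_coe_set_eq, ← Set.ncard_range_of_injective Sum.inl_injective]
    exact Set.ncard_le_ncard (Set.range_subset_iff.mpr hinl)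
  by_cases hK2 : ∃ j, Sum.inr (Sum.inr j) ∈ X
  · obtain ⟨j, hj⟩ := hK2
    have hα1 : Nat.card α + 1 ≤ Nat.card X := by
      rw [Nat.card_coe_set_eq, ← ncard_insert_inr_range_inl (Sum.inr j)]
      exact Set.ncard_le_ncard (Set.insert_subset hj (Set.range_subset_iff.mpr hinl))
    have := isolCount_le_card (G := (cliqueJoinIsolatedK2 α β).induce Xᶜ)
    nlinarith
  · simp only [not_exists] at hK2
    have := isolCount_add_two_le_card (G := (cliqueJoinIsolatedK2 α β).induce Xᶜ)
      (v := ⟨_, hK2 0⟩) (w := ⟨_, hK2 1⟩) (by simp)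
    nlinarith

lemma isolatedToughness_cliqueJoinIsolatedK2 [Finite α] [Finite β] (hβ : 1 ≤ Nat.card β)
    (hβα : Nat.card β ≤ Nat.card α) :
    isolatedToughness (cliqueJoinIsolatedK2 α β) =
      ((Nat.card α + 1 : ℕ) : ENNReal) / ((Nat.card β + 1 : ℕ) : ENNReal) := by
  set X₀ : Set (α ⊕ β ⊕ Fin 2) := insert (Sum.inr (Sum.inr 0)) (Set.range Sum.inl)
  have hX₀ : Nat.card X₀ = Nat.card α + 1 := ncard_insert_inr_range_inl _
  have hiso : isolCount ((cliqueJoinIsolatedK2 α β).induce X₀ᶜ) = Nat.card β + 1 := by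
    rw [isolCount_eq_card_of_forall_not_adj]
    · have := card_add_card_compl_cliqueJoinIsolatedK2 X₀
      omega
    rintro ⟨v | b | j, hv⟩ ⟨w | b' | k, hw⟩ <;>
      simp [X₀] at hv hw ⊢
    fin_cases j <;> fin_cases k <;> simp_all
  exact isolatedToughness_eq_div X₀ hX₀ hiso (by omega) fun X hX => add_one_mul_isolCount_le hβα hX

end CliqueJoin

/-- Remark 1: sharpness of the isolated toughness bound in Theorem 6. -/
theorem stmt3 (n r : ℕ) (h : r + 1 ≤ n)
    (G : SimpleGraph (Fin (n + r + 2) ⊕ (Fin (2 * r + 3) ⊕ Fin 2)))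
    (hG : G = graphJoin (⊤ : SimpleGraph (Fin (n + r + 2)))
      (disjUnion (⊥ : SimpleGraph (Fin (2 * r + 3))) (⊤ : SimpleGraph (Fin 2)))) :
    IsKConnected G (n + r + 2) ∧
    isolatedToughness G = ((n : ENNReal) + r + 3) / (2 * ((r : ENNReal) + 2)) ∧
    ¬ PathFactorCriticalAvoidable G 2 n := by
  subst hG
  refine ⟨by simpa using isKConnected_graphJoin_top (α := Fin (n + r + 2)) _, ?_,
    not_pathFactorCriticalAvoidable_cliqueJoinIsolatedK2 n (by simp; omega) (by simp; omega)⟩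
  refine (isolatedToughness_cliqueJoinIsolatedK2 (by simp) (by simp; omega)).trans ?_
  simp only [Nat.card_fin]
  push_cast
  congr 1 <;> ring
end

section
/- Let n, r be nonnegative integers, G an (n+r+2)-connected graph, W ⊆ V(G) with |W| = n, e ∈ E(G−W), and H = G−W−e. If X ⊆ V(H) satisfies sun(H−X) ≥ 2|X|+1, then |X| ≥ r+2. -/
open SimpleGraph

/-!
If `|X| ≤ r + 1`, then `G − W − X` is connected, being `G` minus at most `n + r + 1` vertices,
so `H − X`, which is `G − W − X` minus at most one edge, has at most two components. Hence
`2|X| + 1 ≤ 2`, i.e. `X = ∅`. But `G − W` is `(r + 2)`-connected, so every vertex has at least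
two neighbours, and deleting the edge `e` leaves a graph without isolated vertices whose leaves
are endpoints of `e`: at most two of them, and not adjacent. No sun is like that: `K₁` is an
isolated vertex, `K₂` is two adjacent leaves, and a corona has at least three leaves.
-/

namespace IsKConnected

variable {V : Type*} {G : SimpleGraph V} {k : ℕ}

lemma finite (hG : IsKConnected G k) : Finite V :=
  Nat.finite_of_card_ne_zero (by have := hG.1; omega)

lemma exists_adj_notMem (hG : IsKConnected G k) {T : Set V} (hT : Nat.card T < k) {c : V}
    (hc : c ∉ T) : ∃ w ∉ T, G.Adj c w := by
  have := hG.finite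
  have hTc : 1 < Tᶜ.ncard := by
    have := T.ncard_add_ncard_compl
    have := hG.1
    rw [Nat.card_coe_set_eq] at hT
    omega
  obtain ⟨o, ho, hoc⟩ := Set.exists_ne_of_one_lt_ncard hTc c
  have : Nontrivial ↥Tᶜ := ⟨⟨⟨c, hc⟩, ⟨o, ho⟩, fun h => hoc (congrArg Subtype.val h).symm⟩⟩
  obtain ⟨w, hw⟩ := (hG.2 T hT).preconnected.exists_adj_of_nontrivial ⟨c, hc⟩
  exact ⟨w, w.2, hw⟩

lemma neighborSet_nontrivial (hG : IsKConnected G k) (hk : 2 ≤ k) (c : V) :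
    (G.neighborSet c).Nontrivial := by
  obtain ⟨w₁, -, h₁⟩ := hG.exists_adj_notMem (T := ∅) (by simp; omega) (Set.notMem_empty c)
  obtain ⟨w₂, h₂, hadj₂⟩ := hG.exists_adj_notMem (T := {w₁}) (by simp; omega)
    (Set.notMem_singleton_iff.2 h₁.ne)
  exact ⟨w₁, h₁, w₂, hadj₂, (Set.notMem_singleton_iff.1 h₂).symm⟩

lemma induce_compl (hG : IsKConnected G k) {W : Set V} {j : ℕ} (hW : Nat.card W + j ≤ k) :
    IsKConnected (G.induce Wᶜ) j := by
  have := hG.finite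
  refine ⟨?_, fun S hS => ?_⟩
  · have := W.ncard_add_ncard_compl
    have := hG.1
    rw [Nat.card_coe_set_eq] at hW ⊢
    omega
  · let T : Set V := W ∪ Subtype.val '' S
    have hT : Nat.card T < k := by
      have : T.ncard ≤ W.ncard + (Subtype.val '' S).ncard := Set.ncard_union_le _ _
      rw [Set.ncard_image_of_injective _ Subtype.val_injective] at this
      rw [Nat.card_coe_set_eq] at hW hS ⊢
      omega
    let φ : G.induce Tᶜ ≃g (G.induce Wᶜ).induce Sᶜ :=
      { toFun := fun a => ⟨⟨a, fun h => a.2 (Or.inl h)⟩, fun h => a.2 (Or.inr ⟨_, h, rfl⟩)⟩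
        invFun := fun b => ⟨b.1, by rintro (h | ⟨c, hc, hcb⟩)
                                    exacts [b.1.2 h, b.2 (Subtype.ext hcb ▸ hc)]⟩
        left_inv := fun _ => rfl
        right_inv := fun _ => rfl
        map_rel_iff' := Iff.rfl }
    exact φ.connected_iff.1 (hG.2 T hT)

end IsKConnected

lemma Sym2.eq_or_eq_or_eq_of_mem {α : Type*} {a b c : α} {e : Sym2 α} (ha : a ∈ e) (hb : b ∈ e)
    (hc : c ∈ e) : a = b ∨ a = c ∨ b = c := by
  induction e using Sym2.ind with
  | _ x y =>
    rw [Sym2.mem_iff] at ha hb hc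
    grind

namespace SimpleGraph

variable {V : Type*} {G : SimpleGraph V}

lemma induce_deleteEdges (s : Set (Sym2 V)) (A : Set V) :
    (G.deleteEdges s).induce A = (G.induce A).deleteEdges (Sym2.map (↑) ⁻¹' s) := by
  ext
  simp

lemma Walk.reachable_deleteEdges_or {s : Set (Sym2 V)} {w t : V} (p : G.Walk w t) :
    (G.deleteEdges s).Reachable w t ∨ ∃ e ∈ s, ∃ x ∈ e, (G.deleteEdges s).Reachable w x := by
  induction p with
  | nil => exact Or.inl .rfl
  | @cons a b _ hab _ ih =>
    by_cases he : s(a, b) ∈ s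
    · exact Or.inr ⟨_, he, a, Sym2.mem_mk_left a b, .rfl⟩
    · have hab' : (G.deleteEdges s).Reachable a b := (deleteEdges_adj.2 ⟨hab, he⟩).reachable
      rcases ih with h | ⟨e, he, x, hx, h⟩
      exacts [Or.inl (hab'.trans h), Or.inr ⟨e, he, x, hx, hab'.trans h⟩]

lemma card_connectedComponent_le_two {u v : V} (h : ∀ w, G.Reachable w u ∨ G.Reachable w v) :
    Nat.card G.ConnectedComponent ≤ 2 := by
  have hsurj : Function.Surjective fun b : Bool => G.connectedComponentMk (if b then u else v) := by
    refine ConnectedComponent.ind fun w => ?_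
    rcases h w with h | h
    exacts [⟨true, (ConnectedComponent.sound h).symm⟩, ⟨false, (ConnectedComponent.sound h).symm⟩]
  simpa using Nat.card_le_card_of_surjective _ hsurj

lemma Connected.card_connectedComponent_deleteEdges_le_two (hG : G.Connected)
    {s : Set (Sym2 V)} (hs : s.Subsingleton) :
    Nat.card (G.deleteEdges s).ConnectedComponent ≤ 2 := by
  obtain ⟨u⟩ := hG.nonempty
  rcases s.eq_empty_or_nonempty with rfl | ⟨e, he⟩
  · refine card_connectedComponent_le_two (u := u) (v := u) fun w => ?_
    simpa using hG.preconnected w u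
  · induction e using Sym2.ind with
    | _ x y =>
      refine card_connectedComponent_le_two (u := x) (v := y) fun w => ?_
      rcases (hG.preconnected w x).some.reachable_deleteEdges_or (s := s) with
        h | ⟨e', he', z, hz, h⟩
      · exact Or.inl h
      · rw [hs he' he, Sym2.mem_iff] at hz
        rcases hz with rfl | rfl
        exacts [Or.inl h, Or.inr h]

lemma ConnectedComponent.image_val_neighborSet_induce_supp (C : G.ConnectedComponent)
    (v : C.supp) : Subtype.val '' ((G.induce C.supp).neighborSet v) = G.neighborSet v := by
  ext w
  constructor
  · rintro ⟨w, hw, rfl⟩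
    exact hw
  · intro hw
    exact ⟨⟨w, C.mem_supp_of_adj_mem_supp v.2 hw⟩, hw, rfl⟩

lemma sunCount_le_card_connectedComponent [Finite V] (G : SimpleGraph V) :
    sunCount G ≤ Nat.card G.ConnectedComponent :=
  Nat.card_le_card_of_injective Subtype.val Subtype.val_injective

lemma not_isSunGraph_of_leaves (hnil : ∀ v, (G.neighborSet v).Nonempty)
    (hleaves : ∀ a b c, (G.neighborSet a).Subsingleton → (G.neighborSet b).Subsingleton →
      (G.neighborSet c).Subsingleton → a = b ∨ a = c ∨ b = c)
    (hindep : ∀ a b, (G.neighborSet a).Subsingleton → (G.neighborSet b).Subsingleton →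
      ¬ G.Adj a b) :
    ¬ IsSunGraph G := by
  rintro (h1 | ⟨h2, -⟩ | ⟨T, h3, -, z, hz⟩)
  · obtain ⟨c, hc⟩ := Nat.card_eq_one_iff_exists.1 h1
    obtain ⟨w, hw⟩ := hnil c
    exact G.ne_of_adj hw (hc w).symm
  · obtain ⟨a⟩ := (Nat.card_pos_iff.1 (by omega : 0 < Nat.card V)).1
    obtain ⟨b, hab⟩ := hnil a
    have hleaf (v : V) : (G.neighborSet v).Subsingleton := fun x hx y hy =>
      ((Nat.card_eq_two_iff' v).1 h2).unique (G.ne_of_adj hx).symm (G.ne_of_adj hy).symm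
    exact hindep a b (hleaf a) (hleaf b) hab
  · have hleaf (p : V) (hp : p ∈ Tᶜ) : (G.neighborSet p).Subsingleton := by
      intro x hx y hy
      have hzp : ((z (z.symm ⟨p, hp⟩) : ↥Tᶜ) : V) = p := by rw [z.apply_symm_apply]
      rw [← hzp] at hx hy
      exact ((hz _ x).1 hx).trans ((hz _ y).1 hy).symm
    have hTc : 2 < Tᶜ.ncard := by
      rw [← Nat.card_coe_set_eq, ← Nat.card_congr z]
      omega
    obtain ⟨a, ha, b, hb, c, hc, hab, hac, hbc⟩ :=
      (Set.two_lt_ncard (Set.finite_of_ncard_pos (by omega))).1 hTc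
    rcases hleaves a b c (hleaf a ha) (hleaf b hb) (hleaf c hc) with h | h | h
    exacts [hab h, hac h, hbc h]

lemma sunCount_eq_zero_of_leaves (hnil : ∀ v, (G.neighborSet v).Nonempty)
    (hleaves : ∀ a b c, (G.neighborSet a).Subsingleton → (G.neighborSet b).Subsingleton →
      (G.neighborSet c).Subsingleton → a = b ∨ a = c ∨ b = c)
    (hindep : ∀ a b, (G.neighborSet a).Subsingleton → (G.neighborSet b).Subsingleton →
      ¬ G.Adj a b) :
    sunCount G = 0 := by
  refine Nat.card_eq_zero.2 (Or.inl ⟨fun ⟨C, hC⟩ => ?_⟩)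
  have himage := C.image_val_neighborSet_induce_supp
  have hleaf (v : C.supp) (hv : ((G.induce C.supp).neighborSet v).Subsingleton) :
      (G.neighborSet v).Subsingleton :=
    himage v ▸ hv.image _
  refine not_isSunGraph_of_leaves ?_ ?_ ?_ hC
  · exact fun v => Set.image_nonempty.1 (himage v ▸ hnil v)
  · intro a b c ha hb hc
    simpa only [Subtype.ext_iff] using hleaves a b c (hleaf a ha) (hleaf b hb) (hleaf c hc)
  · exact fun a b ha hb => hindep a b (hleaf a ha) (hleaf b hb)

lemma neighborSet_deleteEdges_nonempty {s : Set (Sym2 V)} {v : V}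
    (hv : (G.neighborSet v).Nontrivial) (hs : s.Subsingleton) :
    ((G.deleteEdges s).neighborSet v).Nonempty := by
  obtain ⟨w₁, h₁, w₂, h₂, hne⟩ := hv
  by_cases hw₁ : s(v, w₁) ∈ s
  · exact ⟨w₂, deleteEdges_adj.2 ⟨h₂, fun hw₂ => hne (Sym2.congr_right.1 (hs hw₁ hw₂))⟩⟩
  · exact ⟨w₁, deleteEdges_adj.2 ⟨h₁, hw₁⟩⟩

lemma exists_mem_of_neighborSet_deleteEdges_subsingleton {s : Set (Sym2 V)} {v : V}
    (hv : (G.neighborSet v).Nontrivial) (h : ((G.deleteEdges s).neighborSet v).Subsingleton) :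
    ∃ e ∈ s, v ∈ e := by
  by_contra! hs
  obtain ⟨w₁, h₁, w₂, h₂, hne⟩ := hv
  exact hne (h (deleteEdges_adj.2 ⟨h₁, fun he => hs _ he (Sym2.mem_mk_left _ _)⟩)
    (deleteEdges_adj.2 ⟨h₂, fun he => hs _ he (Sym2.mem_mk_left _ _)⟩))

lemma sunCount_deleteEdges_eq_zero (hG : ∀ v, (G.neighborSet v).Nontrivial)
    {s : Set (Sym2 V)} (hs : s.Subsingleton) : sunCount (G.deleteEdges s) = 0 := by
  have hleaf (v : V) := exists_mem_of_neighborSet_deleteEdges_subsingleton (s := s) (hG v)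
  refine sunCount_eq_zero_of_leaves (fun v => neighborSet_deleteEdges_nonempty (hG v) hs) ?_ ?_
  · intro a b c ha hb hc
    obtain ⟨e, he, hae⟩ := hleaf a ha
    obtain ⟨e', he', hbe⟩ := hleaf b hb
    obtain ⟨e'', he'', hce⟩ := hleaf c hc
    rw [hs he' he] at hbe
    rw [hs he'' he] at hce
    exact Sym2.eq_or_eq_or_eq_of_mem hae hbe hce
  · intro a b ha hb hab
    obtain ⟨e, he, hae⟩ := hleaf a ha
    obtain ⟨e', he', hbe⟩ := hleaf b hb
    rw [hs he' he] at hbe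
    rw [deleteEdges_adj] at hab
    exact hab.2 ((Sym2.mem_and_mem_iff hab.1.ne).1 ⟨hae, hbe⟩ ▸ he)

end SimpleGraph

theorem stmt6_general {V : Type*} (n r : ℕ) (G : SimpleGraph V)
    (hconn : IsKConnected G (n + r + 2))
    (W : Set V) (hW : Nat.card W = n)
    (e : Sym2 ↥(Wᶜ))
    (X : Set ↥(Wᶜ))
    (hX : 2 * Nat.card X + 1 ≤
      sunCount (((G.induce (Wᶜ : Set V)).deleteEdges {e}).induce (Xᶜ : Set ↥(Wᶜ)))) :
    r + 2 ≤ Nat.card X := by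
  have := hconn.finite
  have hGW : IsKConnected (G.induce Wᶜ) (r + 2) := hconn.induce_compl (by omega)
  by_contra! hXr
  have hs : (Sym2.map Subtype.val ⁻¹' {e} : Set (Sym2 ↥Xᶜ)).Subsingleton :=
    Set.subsingleton_singleton.preimage (Sym2.map.injective Subtype.val_injective)
  rw [induce_deleteEdges] at hX
  have hcomp := (hGW.2 X hXr).card_connectedComponent_deleteEdges_le_two hs
  have hX0 : Nat.card X = 0 := by
    have := (hX.trans (sunCount_le_card_connectedComponent _)).trans hcomp
    omega
  have hK : IsKConnected ((G.induce Wᶜ).induce Xᶜ) (r + 2) := hGW.induce_compl (by omega)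
  have := sunCount_deleteEdges_eq_zero (hK.neighborSet_nontrivial (by omega)) hs
  omega

/-- Lemma 1: if `sun(H−X) ≥ 2|X|+1` for `H = G−W−e` with `G` `(n+r+2)`-connected,
then `|X| ≥ r+2`. -/
theorem stmt6 {V : Type*} [Fintype V] (n r : ℕ) (G : SimpleGraph V)
    (hconn : IsKConnected G (n + r + 2))
    (W : Set V) (hW : Nat.card W = n)
    (e : Sym2 ↥(Wᶜ)) (he : e ∈ (G.induce (Wᶜ : Set V)).edgeSet)
    (X : Set ↥(Wᶜ))
    (hX : 2 * Nat.card X + 1 ≤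
      sunCount (((G.induce (Wᶜ : Set V)).deleteEdges {e}).induce (Xᶜ : Set ↥(Wᶜ)))) :
    r + 2 ≤ Nat.card X :=
  stmt6_general n r G hconn W hW e X hX
end
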